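/- arXiv:1904.02124 — 4 statements merged into one kernel-verified Lean document; each statement's English description precedes it below -/
import Mathlib

section
/- The DSM implementation of the Signal object (using a shared bit Bit initialized to absent, a shared pointer GoAddr initialized to NIL, procedure signal() that writes present to Bit, reads GoAddr into a local variable, and if that variable is non-NIL writes true through it; and procedure wait() that allocates a fresh local boolean spin variable initialized to false, stores its address in GoAddr, and then returns immediately if Bit equals present and otherwise busy-waits until the spin variable equals true) is linearizable with respect to signal(): provided no two executions of wait() are concurrent, in every run there is a point inside each execution of signal() at which it appears to atomically set the object's State to present. -/
/-!
The DSM implementation of a Signal object (shared bit `Bit` initialized to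
absent, shared pointer `GoAddr` initialized to NIL; `signal()` writes present
to `Bit`, reads `GoAddr` into a local register, and, if non-NIL, writes `true`
through it; `wait()` allocates a fresh local boolean spin variable initialized
to `false`, publishes its address in `GoAddr`, returns immediately if `Bit` is
present, and otherwise busy-waits until the spin variable is `true`), modeled
as a transition system.

STATEMENT 0: provided no two executions of `wait()` are concurrent, in every
run there is a point inside each execution of `signal()` (a linearization
point, between its invocation and its response) at which it appears to
atomically set the object's State to present: the abstract State determined by
these points is consistent with the specification, i.e. every `wait()` returns
only at a time by which some `signal()` has been linearized.
-/

/-- Program counters for the DSM implementation of the Signal object.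
`sig1`–`sig3` are the lines of `signal()` (`sig3` carries the value read from
`GoAddr`); `wait1`–`wait5` are the lines of `wait()` (carrying the address of
the allocated spin variable); `idle` means the process runs neither. -/
inductive PC (Addr : Type) where
  | idle
  | sig1
  | sig2
  | sig3 (a : Option Addr)
  | wait1
  | wait2 (g : Addr)
  | wait3 (g : Addr)
  | wait4 (g : Addr)
  | wait5 (g : Addr)
  deriving DecidableEq

/-- A configuration: the shared `Bit` (`true` ↔ present), the shared pointer
`GoAddr` (`none` ↔ NIL), the pool of boolean spin variables `mem`, the
allocation flags (for freshness of allocation), and all program counters. -/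
structure Config (Proc Addr : Type) where
  bit : Bool
  goAddr : Option Addr
  mem : Addr → Bool
  alloc : Addr → Bool
  pc : Proc → PC Addr

/-- The process is currently executing `wait()`. -/
def InWait {Addr : Type} : PC Addr → Prop
  | PC.wait1 => True
  | PC.wait2 _ => True
  | PC.wait3 _ => True
  | PC.wait4 _ => True
  | PC.wait5 _ => True
  | _ => False

variable {Proc Addr : Type}

/-- One atomic step of the implementation, taken by process `p`. -/
inductive Step [DecidableEq Proc] [DecidableEq Addr] :
    Config Proc Addr → Proc → Config Proc Addr → Prop where
  | invokeSignal (c : Config Proc Addr) (p : Proc) (h : c.pc p = PC.idle) :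
      Step c p { c with pc := Function.update c.pc p PC.sig1 }
  | invokeWait (c : Config Proc Addr) (p : Proc) (h : c.pc p = PC.idle) :
      Step c p { c with pc := Function.update c.pc p PC.wait1 }
  | sig1 (c : Config Proc Addr) (p : Proc) (h : c.pc p = PC.sig1) :
      Step c p { c with bit := true, pc := Function.update c.pc p PC.sig2 }
  | sig2 (c : Config Proc Addr) (p : Proc) (h : c.pc p = PC.sig2) :
      Step c p { c with pc := Function.update c.pc p (PC.sig3 c.goAddr) }
  | sig3none (c : Config Proc Addr) (p : Proc) (h : c.pc p = PC.sig3 none) :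
      Step c p { c with pc := Function.update c.pc p PC.idle }
  | sig3some (c : Config Proc Addr) (p : Proc) (a : Addr)
      (h : c.pc p = PC.sig3 (some a)) :
      Step c p { c with mem := Function.update c.mem a true,
                        pc := Function.update c.pc p PC.idle }
  | wait1 (c : Config Proc Addr) (p : Proc) (g : Addr) (h : c.pc p = PC.wait1)
      (hg : c.alloc g = false) :
      Step c p { c with alloc := Function.update c.alloc g true,
                        pc := Function.update c.pc p (PC.wait2 g) }
  | wait2 (c : Config Proc Addr) (p : Proc) (g : Addr) (h : c.pc p = PC.wait2 g) :
      Step c p { c with mem := Function.update c.mem g false,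
                        pc := Function.update c.pc p (PC.wait3 g) }
  | wait3 (c : Config Proc Addr) (p : Proc) (g : Addr) (h : c.pc p = PC.wait3 g) :
      Step c p { c with goAddr := some g,
                        pc := Function.update c.pc p (PC.wait4 g) }
  | wait4tt (c : Config Proc Addr) (p : Proc) (g : Addr) (h : c.pc p = PC.wait4 g)
      (hb : c.bit = true) :
      Step c p { c with pc := Function.update c.pc p PC.idle }
  | wait4ff (c : Config Proc Addr) (p : Proc) (g : Addr) (h : c.pc p = PC.wait4 g)
      (hb : c.bit = false) :
      Step c p { c with pc := Function.update c.pc p (PC.wait5 g) }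
  | wait5tt (c : Config Proc Addr) (p : Proc) (g : Addr) (h : c.pc p = PC.wait5 g)
      (hm : c.mem g = true) :
      Step c p { c with pc := Function.update c.pc p PC.idle }
  | wait5ff (c : Config Proc Addr) (p : Proc) (g : Addr) (h : c.pc p = PC.wait5 g)
      (hm : c.mem g = false) :
      Step c p c

/-- Initial configurations: `Bit = absent`, `GoAddr = NIL`, nothing allocated,
every process idle. -/
def Init (c : Config Proc Addr) : Prop :=
  c.bit = false ∧ c.goAddr = none ∧ (∀ a, c.alloc a = false) ∧ ∀ p, c.pc p = PC.idle

/-- A run of the implementation: an infinite interleaving of steps.  `act n`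
is the process (if any) taking the step from `cfg n` to `cfg (n+1)`. -/
structure Run (Proc Addr : Type) [DecidableEq Proc] [DecidableEq Addr] where
  cfg : ℕ → Config Proc Addr
  act : ℕ → Option Proc
  init : Init (cfg 0)
  step : ∀ n, match act n with
    | none => cfg (n + 1) = cfg n
    | some p => Step (cfg n) p (cfg (n + 1))

variable [DecidableEq Proc] [DecidableEq Addr]

/-- No two executions of `wait()` are concurrent. -/
def NoConcurrentWaits (R : Run Proc Addr) : Prop :=
  ∀ n p q, InWait ((R.cfg n).pc p) → InWait ((R.cfg n).pc q) → p = q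

/-- Process `p` invokes `signal()` at step `n`. -/
def SigInvoke (R : Run Proc Addr) (n : ℕ) (p : Proc) : Prop :=
  R.act n = some p ∧ (R.cfg n).pc p = PC.idle ∧ (R.cfg (n + 1)).pc p = PC.sig1

/-- The execution of `signal()` invoked by `p` at step `n` responds at step
`m` (its step at `m` returns the process to idle, and it was continuously
executing this operation in between). -/
def SigResponse (R : Run Proc Addr) (n : ℕ) (p : Proc) (m : ℕ) : Prop :=
  SigInvoke R n p ∧ n < m ∧ (R.cfg (m + 1)).pc p = PC.idle ∧
    ∀ j, n < j → j ≤ m → (R.cfg j).pc p ≠ PC.idle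

/-- Step `t` is the response step of an execution of `wait()` by `p`. -/
def WaitReturn (R : Run Proc Addr) (t : ℕ) (p : Proc) : Prop :=
  R.act t = some p ∧ InWait ((R.cfg t).pc p) ∧ (R.cfg (t + 1)).pc p = PC.idle

/-!
Linearize every `signal()` at its invocation. This works because no `wait()`
can return before some `signal()` has been invoked: until then `Bit` is absent,
no process is inside `signal()`, and every waiter past line 2 spins on a
variable that is still `false`. This is preserved by every step other than an
invocation of `signal()`, since only `signal()` writes `Bit` or writes `true`
into a spin variable, and it disables both exits of `wait()`.
-/

namespace PC

def Unsignalled (mem : Addr → Bool) : PC Addr → Prop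
  | idle | wait1 | wait2 _ => True
  | wait3 g | wait4 g | wait5 g => mem g = false
  | sig1 | sig2 | sig3 _ => False

omit [DecidableEq Addr] in
theorem Unsignalled.mono {mem mem' : Addr → Bool}
    (hmem : ∀ a, mem a = false → mem' a = false) :
    ∀ {pc : PC Addr}, pc.Unsignalled mem → pc.Unsignalled mem'
  | idle, _ | wait1, _ | wait2 _, _ => trivial
  | wait3 g, h | wait4 g, h | wait5 g, h => hmem g h

end PC

namespace Config

def Unsignalled (c : Config Proc Addr) : Prop :=
  c.bit = false ∧ ∀ p, (c.pc p).Unsignalled c.mem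

omit [DecidableEq Addr] in
theorem unsignalled_update_pc {c : Config Proc Addr} (hc : c.Unsignalled) {p : Proc}
    {x : PC Addr} (hx : x.Unsignalled c.mem) :
    { c with pc := Function.update c.pc p x }.Unsignalled :=
  ⟨hc.1, (Function.forall_update_iff c.pc fun _ y => y.Unsignalled c.mem).2
    ⟨hx, fun q _ => hc.2 q⟩⟩

omit [DecidableEq Proc] [DecidableEq Addr] in
theorem unsignalled_of_init {c : Config Proc Addr} (h : Init c) : c.Unsignalled :=
  ⟨h.1, fun p => by rw [h.2.2.2 p]; trivial⟩

end Config

theorem Step.unsignalled {c c' : Config Proc Addr} {p : Proc} (hs : Step c p c')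
    (hc : c.Unsignalled) (hnotInvoke : c.pc p = PC.idle → c'.pc p ≠ PC.sig1) :
    c'.Unsignalled := by
  have hp := hc.2 p
  cases hs with
  | invokeSignal h => exact absurd (Function.update_self ..) (hnotInvoke h)
  | sig1 h | sig2 h | sig3none h | sig3some _ h => rw [h] at hp; exact hp.elim
  | wait4tt _ _ hb => simp [hc.1] at hb
  | wait5tt _ h hm => rw [h] at hp; simp [PC.Unsignalled, hm] at hp
  | wait5ff => exact hc
  | invokeWait | wait1 => exact Config.unsignalled_update_pc hc trivial
  | wait3 g h | wait4ff g h _ => rw [h] at hp; exact Config.unsignalled_update_pc hc hp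
  | wait2 g =>
    have hmem : ({ c with mem := Function.update c.mem g false } : Config Proc Addr).Unsignalled :=
      ⟨hc.1, fun q => (hc.2 q).mono fun a ha => by simp [Function.update_apply, ha]⟩
    exact Config.unsignalled_update_pc hmem (Function.update_self ..)

theorem Step.ne_idle_of_inWait {c c' : Config Proc Addr} {p : Proc} (hs : Step c p c')
    (hc : c.Unsignalled) (hw : InWait (c.pc p)) : c'.pc p ≠ PC.idle := by
  have hp := hc.2 p
  cases hs with
  | invokeSignal h | invokeWait h | sig1 h | sig2 h | sig3none h | sig3some _ h =>
    rw [h] at hw; exact hw.elim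
  | wait1 | wait2 | wait3 | wait4ff => simp
  | wait4tt _ _ hb => simp [hc.1] at hb
  | wait5tt _ h hm => rw [h] at hp; simp [PC.Unsignalled, hm] at hp
  | wait5ff _ h => simp [h]

namespace Run

theorem step_of_act (R : Run Proc Addr) {n : ℕ} {p : Proc} (h : R.act n = some p) :
    Step (R.cfg n) p (R.cfg (n + 1)) := by
  simpa [h] using R.step n

theorem unsignalled_of_forall_not_sigInvoke (R : Run Proc Addr) {t : ℕ}
    (h : ∀ n < t, ∀ q, ¬ SigInvoke R n q) : (R.cfg t).Unsignalled := by
  induction t with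
  | zero => exact Config.unsignalled_of_init R.init
  | succ n ih =>
    have hc := ih fun k hk => h k (by omega)
    rcases hact : R.act n with _ | q
    · simpa [hact ▸ R.step n] using hc
    · exact (R.step_of_act hact).unsignalled hc fun hidle hsig =>
        h n (by omega) q ⟨hact, hidle, hsig⟩

end Run

theorem signal_linearizable_general (R : Run Proc Addr) :
    ∃ L : ℕ → ℕ,
      (∀ n p, SigInvoke R n p →
        n ≤ L n ∧ ∀ m, SigResponse R n p m → L n ≤ m) ∧
      (∀ t p, WaitReturn R t p → ∃ n q, SigInvoke R n q ∧ L n ≤ t) := by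
  refine ⟨id, fun n p _ => ⟨le_rfl, fun m hm => hm.2.1.le⟩, ?_⟩
  rintro t p ⟨hact, hw, hidle⟩
  by_contra! hno
  have hc := R.unsignalled_of_forall_not_sigInvoke fun n hn q hq => (hno n q hq).not_ge hn.le
  exact (R.step_of_act hact).ne_idle_of_inWait hc hw hidle

/-- Theorem 1(i): `signal()` is linearizable.  Provided no
two executions of `wait()` are concurrent, there is an assignment `L` of
linearization points to the executions of `signal()` (identified by their
invocation steps) such that each point lies inside the corresponding execution
(at or after the invocation and at or before the response), and at this point
the operation appears to atomically set the object's State to present: every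
`wait()` returns only at a time by which some `signal()` has been linearized,
as required by the specification of the Signal object. -/
theorem signal_linearizable (R : Run Proc Addr) (hcw : NoConcurrentWaits R) :
    ∃ L : ℕ → ℕ,
      (∀ n p, SigInvoke R n p →
        n ≤ L n ∧ ∀ m, SigResponse R n p m → L n ≤ m) ∧
      (∀ t p, WaitReturn R t p → ∃ n q, SigInvoke R n q ∧ L n ≤ t) :=
  signal_linearizable_general R
end

section
/- In the DSM implementation of the Signal object, provided no two executions of wait() are concurrent, whenever an execution of wait() returns, the object's State is present. -/
variable {Proc Addr : Type}

variable [DecidableEq Proc] [DecidableEq Addr]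

/-! `Bit` is never reset, and while it is absent no `signal()` is past its write to `Bit` and the
spin variable of every `wait()` past its initialization is still `false`, since only a `signal()`
that has already written `Bit` writes `true` to a spin variable. So a `wait()` that returns,
either at line 4 after reading `Bit` or at line 5 after reading its spin variable as `true`, does
so while `Bit` is present. -/

def AbsentCompatible (mem : Addr → Bool) : PC Addr → Prop
  | .sig2 | .sig3 _ => False
  | .wait3 g | .wait4 g | .wait5 g => mem g = false
  | _ => True

lemma AbsentCompatible.update_false {mem : Addr → Bool} {x : PC Addr} (a : Addr)
    (h : AbsentCompatible mem x) : AbsentCompatible (Function.update mem a false) x := by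
  cases x <;> simp_all [AbsentCompatible, Function.update_apply]

def Config.Invariant (c : Config Proc Addr) : Prop :=
  c.bit = true ∨ ∀ q, AbsentCompatible c.mem (c.pc q)

lemma Step.bit_eq_true {c c' : Config Proc Addr} {p : Proc} (hs : Step c p c')
    (hb : c.bit = true) : c'.bit = true := by
  cases hs <;> first | rfl | exact hb

lemma Step.invariant {c c' : Config Proc Addr} {p : Proc} (hs : Step c p c')
    (hI : c.Invariant) : c'.Invariant := by
  rcases hI with hb | hI
  · exact Or.inl (hs.bit_eq_true hb)
  have keep : ∀ x, AbsentCompatible c.mem x →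
      ∀ q, AbsentCompatible c.mem (Function.update c.pc p x q) := fun x hx =>
    Function.forall_update_iff _ (p := fun _ y => AbsentCompatible c.mem y) |>.mpr
      ⟨hx, fun q _ => hI q⟩
  have hp := hI p
  cases hs with
  | sig1 => exact Or.inl rfl
  | sig2 h | sig3some _ h => rw [h] at hp; exact hp.elim
  | wait2 g =>
    exact Or.inr (Function.forall_update_iff _ (p := fun _ y => AbsentCompatible _ y) |>.mpr
      ⟨Function.update_self .., fun q _ => (hI q).update_false g⟩)
  | wait3 g h | wait4ff g h => rw [h] at hp; exact Or.inr (keep _ hp)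
  | wait5ff => exact Or.inr hI
  | _ => exact Or.inr (keep _ trivial)

lemma Run.step_of_act_s1 (R : Run Proc Addr) {n : ℕ} {p : Proc} (h : R.act n = some p) :
    Step (R.cfg n) p (R.cfg (n + 1)) := by
  simpa [h] using R.step n

lemma Run.invariant (R : Run Proc Addr) (n : ℕ) : (R.cfg n).Invariant := by
  induction n with
  | zero => exact Or.inr fun q => by simp [R.init.2.2.2 q, AbsentCompatible]
  | succ n ih =>
    cases hact : R.act n with
    | none =>
      have hstay : R.cfg (n + 1) = R.cfg n := by simpa [hact] using R.step n
      exact hstay ▸ ih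
    | some p => exact (R.step_of_act_s1 hact).invariant ih

lemma Step.returns_from_wait {c c' : Config Proc Addr} {p : Proc} (hs : Step c p c')
    (hwait : InWait (c.pc p)) (hidle : c'.pc p = PC.idle) :
    c.bit = true ∨ ∃ g, c.pc p = PC.wait5 g ∧ c.mem g = true := by
  cases hs with
  | wait4tt _ _ hb => exact Or.inl hb
  | wait5tt g h hm => exact Or.inr ⟨g, h, hm⟩
  | invokeSignal h | invokeWait h | sig1 h | sig2 h | sig3none h | sig3some _ h =>
    rw [h] at hwait; exact hwait.elim
  | wait5ff g h => rw [h] at hidle; cases hidle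
  | _ => simp only [Function.update_self] at hidle; cases hidle

theorem wait_returns_only_when_present_general (R : Run Proc Addr) :
    ∀ t p, WaitReturn R t p → (R.cfg t).bit = true := by
  rintro t p ⟨hact, hwait, hidle⟩
  rcases R.invariant t with hb | hI
  · exact hb
  rcases (R.step_of_act_s1 hact).returns_from_wait hwait hidle with hb | ⟨g, hpc, hmem⟩
  · exact hb
  · have hspin : (R.cfg t).mem g = false := by have := hI p; rwa [hpc] at this
    simp [hspin] at hmem

/-- Theorem 1(ii): in the DSM implementation of the Signal
object, provided no two executions of `wait()` are concurrent, whenever an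
execution of `wait()` returns, the object's State is present (i.e. the shared
bit recording `State = present` holds at the moment of the response). -/
theorem wait_returns_only_when_present (R : Run Proc Addr)
    (hcw : NoConcurrentWaits R) :
    ∀ t p, WaitReturn R t p → (R.cfg t).bit = true :=
  wait_returns_only_when_present_general R
end

section
/- In the DSM implementation of the Signal object, provided no two executions of wait() are concurrent, every execution of signal() and every execution of wait() incurs only O(1) remote memory references on a DSM machine: in particular, the busy-waiting in wait() is performed on a freshly allocated boolean variable residing in the waiting process's own memory partition. -/
variable {Proc Addr : Type}

variable [DecidableEq Proc] [DecidableEq Addr]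

/-- The allocation in `wait()` (line 1) creates the fresh spin variable in the
allocating process's own memory partition, as the implementation prescribes. -/
def AllocInOwnPartition (R : Run Proc Addr) (owner : Addr → Proc) : Prop :=
  ∀ n p g, R.act n = some p → (R.cfg n).pc p = PC.wait1 →
    (R.cfg (n + 1)).pc p = PC.wait2 g → owner g = p

/-- Whether the step taken by process `p` from program counter `pc` counts as
a remote memory reference on a DSM machine with partition map `owner`:
accesses to the shared variables `Bit` (lines sig1, wait4) and `GoAddr`
(lines sig2, wait3) are (conservatively) counted as remote; accesses to a
boolean spin variable at address `a` (lines sig3(some a), wait2, wait5) are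
remote exactly when `a` does not reside in `p`'s partition; the purely local
steps (invocation, the NIL test of sig3, allocation of a fresh variable in
one's own partition) are not RMRs. -/
def rmrStep [DecidableEq Proc] (owner : Addr → Proc) (p : Proc) :
    PC Addr → Bool
  | PC.idle => false
  | PC.sig1 => true
  | PC.sig2 => true
  | PC.sig3 none => false
  | PC.sig3 (some a) => decide (owner a ≠ p)
  | PC.wait1 => false
  | PC.wait2 g => decide (owner g ≠ p)
  | PC.wait3 _ => true
  | PC.wait4 _ => true
  | PC.wait5 g => decide (owner g ≠ p)

/-- The steps `n, …, m` all lie inside a single operation execution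
(`signal()` or `wait()`) by process `p`, which is invoked at step `n`. -/
def OpWithin (R : Run Proc Addr) (p : Proc) (n m : ℕ) : Prop :=
  R.act n = some p ∧ (R.cfg n).pc p = PC.idle ∧
    (R.cfg (n + 1)).pc p ≠ PC.idle ∧
    ∀ j, n < j → j ≤ m → (R.cfg j).pc p ≠ PC.idle

/-!
Rank the program counters by their line number inside `signal()` resp. `wait()`. Within one
operation execution the rank never decreases, and every step of the operation that is an RMR
and does not end it raises the rank: the only step that keeps it (a failed test in the spin loop)
reads the spin variable, which lies in the waiting process's own partition because it was
allocated there and the pointer is carried along unchanged from line 2 to line 5. Hence the ranks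
of the RMR steps of one execution are distinct values in `{1, …, 4}`, so there are at most four.
-/

namespace PC

variable {Addr : Type}

def rank : PC Addr → ℕ
  | .idle => 0
  | .sig1 => 1
  | .sig2 => 2
  | .sig3 _ => 3
  | .wait1 => 1
  | .wait2 _ => 2
  | .wait3 _ => 3
  | .wait4 _ => 4
  | .wait5 _ => 5

def spinVar : PC Addr → Option Addr
  | .wait2 g | .wait3 g | .wait4 g | .wait5 g => some g
  | _ => none

lemma rank_mem_Icc_of_rmrStep {Proc : Type} [DecidableEq Proc] {owner : Addr → Proc} {p : Proc}
    {pc : PC Addr} (hloc : ∀ g, pc.spinVar = some g → owner g = p)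
    (h : rmrStep owner p pc = true) : pc.rank ∈ Finset.Icc 1 4 := by
  cases pc with
  | wait5 g => simp [rmrStep, hloc g rfl] at h
  | sig3 a => cases a <;> simp_all [rmrStep, rank]
  | _ => simp_all [rmrStep, rank]

end PC

namespace Step

variable {c c' : Config Proc Addr} {p q : Proc}

lemma pc_of_ne (h : Step c q c') (hpq : p ≠ q) : c'.pc p = c.pc p := by
  cases h <;> simp [Function.update_of_ne hpq]

lemma spinVar_eq_or_alloc {g : Addr} (h : Step c p c') (hg : (c'.pc p).spinVar = some g) :
    (c.pc p).spinVar = some g ∨ (c.pc p = .wait1 ∧ c'.pc p = .wait2 g) := by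
  cases h <;> simp_all [PC.spinVar]

lemma rank_lt_or_spin (h : Step c p c') (hne : c'.pc p ≠ .idle) :
    (c.pc p).rank < (c'.pc p).rank ∨ ∃ g, c.pc p = .wait5 g ∧ c'.pc p = c.pc p := by
  cases h <;> simp_all [PC.rank]

end Step

namespace Run

variable (R : Run Proc Addr) {owner : Addr → Proc} {n : ℕ} {p : Proc}

lemma step_of_act_eq_some {q : Proc} (h : R.act n = some q) :
    Step (R.cfg n) q (R.cfg (n + 1)) := by
  simpa [h] using R.step n

lemma pc_succ_of_act_ne (h : R.act n ≠ some p) : (R.cfg (n + 1)).pc p = (R.cfg n).pc p := by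
  cases hact : R.act n with
  | none =>
    have hstutter := R.step n
    simp only [hact] at hstutter
    rw [hstutter]
  | some q =>
    exact (R.step_of_act_eq_some hact).pc_of_ne fun hpq => h (hpq ▸ hact)

lemma owner_spinVar (hA : AllocInOwnPartition R owner) :
    ∀ n p g, ((R.cfg n).pc p).spinVar = some g → owner g = p := by
  intro n
  induction n with
  | zero => simp [R.init.2.2.2, PC.spinVar]
  | succ n ih =>
    intro p g hg
    by_cases hact : R.act n = some p
    · rcases (R.step_of_act_eq_some hact).spinVar_eq_or_alloc hg with hprev | ⟨h1, h2⟩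
      · exact ih p g hprev
      · exact hA n p g hact h1 h2
    · exact ih p g (R.pc_succ_of_act_ne hact ▸ hg)

lemma rank_le_succ (hne : (R.cfg (n + 1)).pc p ≠ .idle) :
    ((R.cfg n).pc p).rank ≤ ((R.cfg (n + 1)).pc p).rank := by
  by_cases hact : R.act n = some p
  · rcases (R.step_of_act_eq_some hact).rank_lt_or_spin hne with hlt | ⟨_, _, hpc⟩
    · exact hlt.le
    · rw [hpc]
  · rw [R.pc_succ_of_act_ne hact]

lemma rank_lt_succ_of_rmrStep (hA : AllocInOwnPartition R owner) (hact : R.act n = some p)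
    (hne : (R.cfg (n + 1)).pc p ≠ .idle) (hrmr : rmrStep owner p ((R.cfg n).pc p) = true) :
    ((R.cfg n).pc p).rank < ((R.cfg (n + 1)).pc p).rank := by
  rcases (R.step_of_act_eq_some hact).rank_lt_or_spin hne with hlt | ⟨g, hg, _⟩
  · exact hlt
  · have hown := R.owner_spinVar hA n p g (by simp [hg, PC.spinVar])
    simp [hg, rmrStep, hown] at hrmr

end Run

namespace OpWithin

variable {R : Run Proc Addr} {owner : Addr → Proc} {p : Proc} {n m : ℕ}

lemma rank_monotoneOn (hop : OpWithin R p n m) :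
    MonotoneOn (fun j => ((R.cfg j).pc p).rank) (Set.Icc n m) :=
  monotoneOn_of_le_succ Set.ordConnected_Icc fun a _ ha ha' =>
    R.rank_le_succ (hop.2.2.2 (a + 1) (Nat.lt_succ_of_le ha.1) ha'.2)

lemma card_rmr_le (hA : AllocInOwnPartition R owner) (hop : OpWithin R p n m) :
    ((Finset.Icc n m).filter (fun j =>
        R.act j = some p ∧ rmrStep owner p ((R.cfg j).pc p) = true)).card ≤ 4 := by
  set rmrSteps := (Finset.Icc n m).filter (fun j =>
    R.act j = some p ∧ rmrStep owner p ((R.cfg j).pc p) = true)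
  have hstrict : StrictMonoOn (fun j => ((R.cfg j).pc p).rank) rmrSteps := by
    intro j hj k hk hjk
    simp only [rmrSteps, Finset.coe_filter, Finset.mem_Icc, Set.mem_ofPred_eq] at hj hk
    calc ((R.cfg j).pc p).rank
        < ((R.cfg (j + 1)).pc p).rank :=
          R.rank_lt_succ_of_rmrStep hA hj.2.1 (hop.2.2.2 (j + 1) (by omega) (by omega)) hj.2.2
      _ ≤ ((R.cfg k).pc p).rank :=
          hop.rank_monotoneOn ⟨by omega, by omega⟩ ⟨hk.1.1, hk.1.2⟩ hjk
  calc _ ≤ (Finset.Icc 1 4).card :=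
        Finset.card_le_card_of_injOn _
          (fun j hj => PC.rank_mem_Icc_of_rmrStep (R.owner_spinVar hA j p)
            (Finset.mem_filter.mp hj).2.2) hstrict.injOn
    _ = 4 := rfl

end OpWithin

/-- Theorem 1(v): in the DSM implementation of the Signal
object, provided no two executions of `wait()` are concurrent (and the fresh
spin variable of each `wait()` is hosted in the waiting process's own memory
partition, as the code prescribes), every execution of `signal()` and every
execution of `wait()` incurs only O(1) remote memory references on a DSM
machine; in particular, the busy-waiting in `wait()` is performed on a freshly
allocated boolean variable residing in the waiting process's own memory
partition (hence spinning incurs no RMRs). -/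
theorem signal_wait_constant_RMR :
    ∃ b : ℕ, ∀ (R : Run Proc Addr) (owner : Addr → Proc),
      NoConcurrentWaits R → AllocInOwnPartition R owner →
      (∀ (n : ℕ) (p : Proc) (g : Addr),
          (R.cfg n).pc p = PC.wait5 g → owner g = p) ∧
      (∀ (p : Proc) (n m : ℕ), OpWithin R p n m →
        (((Finset.Icc n m).filter (fun j =>
            R.act j = some p ∧
              rmrStep owner p ((R.cfg j).pc p) = true)).card) ≤ b) := by
  refine ⟨4, fun R owner _ hA => ⟨fun n p g h => ?_, fun p n m hop => hop.card_rmr_le hA⟩⟩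
  exact R.owner_spinVar hA n p g (by simp [h, PC.spinVar])
end

section
/- (Mutual Exclusion) In every configuration of every run of the k-ported recoverable mutual exclusion algorithm, at most one process is in the Critical Section; equivalently, at most one process π has hidden program counter pĉ(π) = (the first line of Exit). This follows from the invariant: if two processes were both in the CS they would both belong to the set Q of queued processes, but the invariant's ordering condition on Q forces every queued process other than the first in the order to have pĉ in {line 6, line 16}, a contradiction. -/
theorem List.eq_of_mem_of_notMem_tail {α : Type*} {L : List α} {a b : α}
    (ha : a ∈ L) (hb : b ∈ L) (ha' : a ∉ L.tail) (hb' : b ∉ L.tail) : a = b := by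
  cases L with
  | nil => simp at ha
  | cons x t =>
    rw [List.tail_cons] at ha' hb'
    exact ((List.mem_cons.1 ha).resolve_right ha').trans ((List.mem_cons.1 hb).resolve_right hb').symm

theorem mutual_exclusion_from_invariant
    {Proc Line Config : Type}
    (line6 line16 csLine : Line)
    (h6 : csLine ≠ line6) (h16 : csLine ≠ line16)
    -- hidden program counter of each process in each configuration
    (pch : Config → Proc → Line)
    -- the set of queued processes in each configuration
    (Q : Config → Set Proc)
    -- the configurations of an arbitrary run of the algorithm
    (run : ℕ → Config)
    -- by definition of Q, a process in the CS is a queued process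
    (hQ : ∀ n p, pch (run n) p = csLine → p ∈ Q (run n))
    -- invariant Condition 17: whenever Q is nonempty there is an ordering
    -- π₁, …, π_l of the (distinct) processes of Q such that every process
    -- other than π₁ has hidden program counter line 6 or line 16
    (horder : ∀ n, (Q (run n)).Nonempty →
      ∃ L : List Proc, L.Nodup ∧ (∀ p, p ∈ Q (run n) ↔ p ∈ L) ∧
        ∀ p ∈ L.tail, pch (run n) p = line6 ∨ pch (run n) p = line16) :
    -- Mutual Exclusion: at most one process is in the CS at any point
    ∀ n p q, pch (run n) p = csLine → pch (run n) q = csLine → p = q := by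
  intro n p q hp hq
  obtain ⟨L, -, hmemL, htail⟩ := horder n ⟨p, hQ n p hp⟩
  have mem_of_inCS : ∀ r, pch (run n) r = csLine → r ∈ L := fun r hr => (hmemL r).1 (hQ n r hr)
  have notMem_tail_of_inCS : ∀ r, pch (run n) r = csLine → r ∉ L.tail := fun r hr hrt =>
    (htail r hrt).elim (fun h => h6 (hr.symm.trans h)) (fun h => h16 (hr.symm.trans h))
  exact List.eq_of_mem_of_notMem_tail (mem_of_inCS p hp) (mem_of_inCS q hq)
    (notMem_tail_of_inCS p hp) (notMem_tail_of_inCS q hq)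
end
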